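/- The equator of the connected-sum sphere is a closed Reeb orbit: the curve γ(t) = (2cos(t/2), 2sin(t/2), 0, 0) satisfies γ′(t) = R(γ(t)) for all t ∈ ℝ, f(γ(t)) = 1 and the w-coordinate of γ(t) is 0 for all t, γ(t + 4π) = γ(t) for all t, and the range of γ equals the special hyperbolic orbit h = {p : x² + y² = 4, z = w = 0}. -/

import Mathlib

noncomputable section

open Real

/-- The function `f(x,y,z,w) = x²/4 + y²/4 + z² - w²/2` from the Weinstein one-handle model. -/
def fW (p : Fin 4 → ℝ) : ℝ :=
  (1 / 4) * p 0 ^ 2 + (1 / 4) * p 1 ^ 2 + p 2 ^ 2 - (1 / 2) * p 3 ^ 2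

/-- The function `κ(p) = 1/(1 + 3z² + (3/2)w²)`. -/
def κW (p : Fin 4 → ℝ) : ℝ :=
  1 / (1 + 3 * p 2 ^ 2 + (3 / 2) * p 3 ^ 2)

/-- The Reeb vector field `R(p) = κ(p)·(-(1/2)y, (1/2)x, w, 2z)`. -/
def RW (p : Fin 4 → ℝ) : Fin 4 → ℝ :=
  κW p • ![-(1 / 2) * p 1, (1 / 2) * p 0, p 3, 2 * p 2]

/-- The parametrization `γ(t) = (2cos(t/2), 2sin(t/2), 0, 0)` of the equator of the
connected-sum sphere. -/
def γW (t : ℝ) : Fin 4 → ℝ :=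
  ![2 * Real.cos (t / 2), 2 * Real.sin (t / 2), 0, 0]

/-- The equator of the connected-sum sphere is a closed Reeb orbit: `γ` solves `γ' = R(γ)`,
lies on `S₊ = {f = 1, w = 0}`, is `4π`-periodic, and its range is the special hyperbolic
orbit `h = {x² + y² = 4, z = w = 0}`. -/
theorem equator_is_closed_reeb_orbit :
    (∀ t : ℝ, HasDerivAt γW (RW (γW t)) t) ∧
    (∀ t : ℝ, fW (γW t) = 1) ∧
    (∀ t : ℝ, γW t 3 = 0) ∧
    (∀ t : ℝ, γW (t + 4 * π) = γW t) ∧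
    Set.range γW = {p : Fin 4 → ℝ | p 0 ^ 2 + p 1 ^ 2 = 4 ∧ p 2 = 0 ∧ p 3 = 0} := by
  refine ⟨?_, ?_, ?_, ?_, ?_⟩
  · intro t
    have hR : RW (γW t) = ![-Real.sin (t/2), Real.cos (t/2), 0, 0] := by
      simp only [RW, κW, γW]
      norm_num [Matrix.cons_val_two, Matrix.cons_val_three, Matrix.tail_cons, Matrix.head_cons]
      constructor <;> ring
    rw [hR, hasDerivAt_pi]
    intro i
    have hc : HasDerivAt (fun t : ℝ => 2 * Real.cos (t / 2)) (-Real.sin (t/2)) t := by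
      have := ((Real.hasDerivAt_cos (t/2)).comp t ((hasDerivAt_id t).div_const 2)).const_mul 2
      exact this.congr_deriv (by ring)
    have hs : HasDerivAt (fun t : ℝ => 2 * Real.sin (t / 2)) (Real.cos (t/2)) t := by
      have := ((Real.hasDerivAt_sin (t/2)).comp t ((hasDerivAt_id t).div_const 2)).const_mul 2
      exact this.congr_deriv (by ring)
    fin_cases i
    · simpa [γW] using hc
    · simpa [γW] using hs
    · simpa [γW] using hasDerivAt_const t (0:ℝ)
    · simpa [γW] using hasDerivAt_const t (0:ℝ)
  · intro t
    simp only [fW, γW]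
    norm_num [Matrix.cons_val_two, Matrix.cons_val_three, Matrix.tail_cons, Matrix.head_cons]
    have := Real.sin_sq_add_cos_sq (t/2)
    nlinarith
  · intro t; simp [γW]
  · intro t
    have h2 : (t + 4 * π) / 2 = t / 2 + 2 * π := by ring
    simp [γW, h2, Real.cos_add_two_pi, Real.sin_add_two_pi]
  · ext p
    simp only [Set.mem_range, Set.mem_setOf_eq]
    constructor
    · rintro ⟨t, rfl⟩
      refine ⟨?_, by simp [γW], by simp [γW]⟩
      simp only [γW]
      norm_num
      have := Real.sin_sq_add_cos_sq (t/2)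
      nlinarith
    · rintro ⟨h1, h2, h3⟩
      set z : ℂ := ⟨p 0 / 2, p 1 / 2⟩ with hz
      have habs : ‖z‖ = 1 := by
        simp only [Complex.norm_def, Complex.normSq_mk, hz]
        rw [show p 0 / 2 * (p 0 / 2) + p 1 / 2 * (p 1 / 2) = (p 0 ^ 2 + p 1 ^ 2) / 4 by ring, h1]
        norm_num
      have hz0 : z ≠ 0 := by
        intro h; rw [h] at habs; simp at habs
      refine ⟨2 * Complex.arg z, ?_⟩
      have hcos : Real.cos (Complex.arg z) = p 0 / 2 := by
        rw [Complex.cos_arg hz0, habs]; simp [hz]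
      have hsin : Real.sin (Complex.arg z) = p 1 / 2 := by
        rw [Complex.sin_arg, habs]; simp [hz]
      funext i
      fin_cases i <;>
        simp [γW, mul_div_assoc, hcos, hsin, h2, h3] <;> linarith
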